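/- Let K be a zero-dimensional compact Hausdorff space whose set of isolated points is dense, B the closed unit ball of C(K), and Φ : B → B a non-expansive bijection satisfying properties (1)–(6). If f ∈ B is such that the set S_f = { x ∈ K : f(x) ∉ {-1, 1} } is finite, then Φ(f) = f. -/

import Mathlib

open Set

section Helpers

variable {K : Type*} [TopologicalSpace K] [CompactSpace K] [T2Space K]

private lemma ball_mem_iff (f : C(K, ℝ)) :
    f ∈ Metric.closedBall (0 : C(K, ℝ)) 1 ↔ ∀ x, |f x| ≤ 1 := by
  rw [Metric.mem_closedBall, dist_zero_right,
    ContinuousMap.norm_le (f := f) zero_le_one]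
  simp [Real.norm_eq_abs]

open scoped Classical in
/-- Update of a continuous map on a clopen set to a constant value. -/
private noncomputable def cupd (f : C(K, ℝ)) (s : Set K) (v : ℝ) (hs : IsClopen s) :
    C(K, ℝ) :=
  ⟨s.piecewise (fun _ => v) f, by
    refine Continuous.piecewise ?_ continuous_const f.continuous
    simp [hs.frontier_eq]⟩

private lemma cupd_of_mem {f : C(K, ℝ)} {s : Set K} {v : ℝ} {hs : IsClopen s} {z : K}
    (hz : z ∈ s) : cupd f s v hs z = v := by
  classical
  simp only [cupd, ContinuousMap.coe_mk]
  rw [Set.piecewise_eq_of_mem (hi := by exact hz)]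

private lemma cupd_of_not_mem {f : C(K, ℝ)} {s : Set K} {v : ℝ} {hs : IsClopen s} {z : K}
    (hz : z ∉ s) : cupd f s v hs z = f z := by
  classical
  simp only [cupd, ContinuousMap.coe_mk]
  rw [Set.piecewise_eq_of_notMem (hi := by exact hz)]

/-- A dense set meets every open set densely. -/
private lemma open_subset_closure_inter {s U : Set K} (hd : Dense s) (hU : IsOpen U) :
    U ⊆ closure (U ∩ s) := by
  intro z hz
  rw [mem_closure_iff]
  intro o ho hzo
  obtain ⟨w, ⟨hwo, hwU⟩, hws⟩ := hd.inter_open_nonempty (o ∩ U) (ho.inter hU) ⟨z, hzo, hz⟩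
  exact ⟨w, hwo, hwU, hws⟩

private lemma S_isOpen (f : C(K, ℝ)) : IsOpen {x : K | f x ≠ 1 ∧ f x ≠ -1} := by
  have h1 : IsOpen {x : K | f x ≠ 1} := by
    have : {x : K | f x ≠ 1} = f ⁻¹' ({1}ᶜ) := rfl
    rw [this]
    exact (isOpen_compl_singleton).preimage f.continuous
  have h2 : IsOpen {x : K | f x ≠ -1} := by
    have : {x : K | f x ≠ -1} = f ⁻¹' ({-1}ᶜ) := rfl
    rw [this]
    exact (isOpen_compl_singleton).preimage f.continuous
  exact (h1.inter h2 : IsOpen ({x : K | f x ≠ 1} ∩ {x : K | f x ≠ -1}))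

private lemma isolated_of_mem_S (f : C(K, ℝ))
    (hSf : {x : K | f x ≠ 1 ∧ f x ≠ -1}.Finite) {x : K}
    (hx : x ∈ {x : K | f x ≠ 1 ∧ f x ≠ -1}) : IsOpen ({x} : Set K) := by
  set S := {x : K | f x ≠ 1 ∧ f x ≠ -1} with hS
  have hdiff : IsClosed (S \ {x}) := (hSf.subset diff_subset).isClosed
  have : ({x} : Set K) = S \ (S \ {x}) := by
    ext z
    constructor
    · rintro rfl
      exact ⟨hx, fun h => h.2 rfl⟩
    · rintro ⟨hzS, hz⟩
      by_contra hne
      exact hz ⟨hzS, hne⟩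
  rw [this]
  exact (S_isOpen f).sdiff hdiff

end Helpers

/-- Lemma 7 of the paper: if `f` in the unit ball of `C(K)` takes values in `{-1, 1}` outside
a finite set, then `Φ f = f`. -/
theorem Phi_fixes_almost_extreme
    (K : Type*) [TopologicalSpace K] [CompactSpace K] [T2Space K]
    (hbasis : TopologicalSpace.IsTopologicalBasis {s : Set K | IsClopen s})
    (hdense : Dense {x : K | IsOpen ({x} : Set K)})
    (Φ Ψ : ↥(Metric.closedBall (0 : C(K, ℝ)) 1) → ↥(Metric.closedBall (0 : C(K, ℝ)) 1))
    (hlip : LipschitzWith 1 Φ)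
    (hinv₁ : Function.LeftInverse Ψ Φ) (hinv₂ : Function.RightInverse Ψ Φ)
    (hP1 : ∀ (f : ↥(Metric.closedBall (0 : C(K, ℝ)) 1)) (x : K), IsOpen ({x} : Set K) →
      (f : C(K, ℝ)) x = 0 → (Φ f : C(K, ℝ)) x = 0)
    (hP2 : ∀ (f : ↥(Metric.closedBall (0 : C(K, ℝ)) 1)) (x : K), IsOpen ({x} : Set K) →
      (f : C(K, ℝ)) x < 0 → (Φ f : C(K, ℝ)) x ≤ 0)
    (hP3 : ∀ (f : ↥(Metric.closedBall (0 : C(K, ℝ)) 1)) (x : K), IsOpen ({x} : Set K) →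
      (f : C(K, ℝ)) x > 0 → (Φ f : C(K, ℝ)) x ≥ 0)
    (hP4 : ∀ (g : ↥(Metric.closedBall (0 : C(K, ℝ)) 1)) (x : K), IsOpen ({x} : Set K) →
      (g : C(K, ℝ)) x < 0 → (Ψ g : C(K, ℝ)) x < 0)
    (hP5 : ∀ (g : ↥(Metric.closedBall (0 : C(K, ℝ)) 1)) (x : K), IsOpen ({x} : Set K) →
      (g : C(K, ℝ)) x > 0 → (Ψ g : C(K, ℝ)) x > 0)
    (hP6 : ∀ g : ↥(Metric.closedBall (0 : C(K, ℝ)) 1),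
      (∀ x : K, |(g : C(K, ℝ)) x| = 1) → Φ g = g)
    (f : ↥(Metric.closedBall (0 : C(K, ℝ)) 1))
    (hSf : {x : K | (f : C(K, ℝ)) x ≠ 1 ∧ (f : C(K, ℝ)) x ≠ -1}.Finite) :
    Φ f = f := by
  classical
  -- pointwise bound for members of the ball
  have hbd : ∀ (g : ↥(Metric.closedBall (0 : C(K, ℝ)) 1)) (x : K), |(g : C(K, ℝ)) x| ≤ 1 := by
    intro g x
    exact (ball_mem_iff (g : C(K, ℝ))).mp g.2 x
  -- nonexpansiveness
  have hne : ∀ a b : ↥(Metric.closedBall (0 : C(K, ℝ)) 1), dist (Φ a) (Φ b) ≤ dist a b := by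
    intro a b
    simpa using hlip.dist_le_mul a b
  -- expansiveness of Ψ
  have hexp : ∀ a b : ↥(Metric.closedBall (0 : C(K, ℝ)) 1), dist a b ≤ dist (Ψ a) (Ψ b) := by
    intro a b
    have h := hne (Ψ a) (Ψ b)
    rwa [hinv₂ a, hinv₂ b] at h
  -- distance from pointwise bounds
  have hdist_le : ∀ (a b : ↥(Metric.closedBall (0 : C(K, ℝ)) 1)) (C : ℝ), 0 ≤ C →
      (∀ x, |(a : C(K, ℝ)) x - (b : C(K, ℝ)) x| ≤ C) → dist a b ≤ C := by
    intro a b C hC h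
    rw [Subtype.dist_eq]
    exact (ContinuousMap.dist_le hC).mpr (fun x => by
      simpa [Real.dist_eq] using h x)
  have hdist_ge : ∀ (a b : ↥(Metric.closedBall (0 : C(K, ℝ)) 1)) (x : K), |(a : C(K, ℝ)) x - (b : C(K, ℝ)) x| ≤ dist a b := by
    intro a b x
    have := ContinuousMap.dist_apply_le_dist (f := (a : C(K, ℝ))) (g := (b : C(K, ℝ))) x
    rw [← Subtype.dist_eq] at this
    simpa [Real.dist_eq] using this
  -- membership of updates
  have hupd_mem : ∀ (g : ↥(Metric.closedBall (0 : C(K, ℝ)) 1)) (s : Set K) (v : ℝ) (hs : IsClopen s), |v| ≤ 1 →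
      cupd (g : C(K, ℝ)) s v hs ∈ Metric.closedBall (0 : C(K, ℝ)) 1 := by
    intro g s v hs hv
    rw [ball_mem_iff]
    intro x
    by_cases hx : x ∈ s
    · rw [cupd_of_mem hx]; exact hv
    · rw [cupd_of_not_mem hx]; exact hbd g x
  -- the main claim, by induction on the cardinality of the exceptional set, for
  -- nowhere-vanishing functions
  have main : ∀ (n : ℕ) (g : ↥(Metric.closedBall (0 : C(K, ℝ)) 1)),
      {x : K | (g : C(K, ℝ)) x ≠ 1 ∧ (g : C(K, ℝ)) x ≠ -1}.Finite →
      (∀ x : K, (g : C(K, ℝ)) x ≠ 0) →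
      {x : K | (g : C(K, ℝ)) x ≠ 1 ∧ (g : C(K, ℝ)) x ≠ -1}.ncard ≤ n →
      Φ g = g := by
    intro n
    induction n with
    | zero =>
      intro g hfin _ hcard
      have hempty : {x : K | (g : C(K, ℝ)) x ≠ 1 ∧ (g : C(K, ℝ)) x ≠ -1} = ∅ := by
        have := Nat.le_zero.mp hcard
        exact (Set.ncard_eq_zero hfin).mp this
      refine hP6 g fun x => ?_
      have hx : x ∉ {x : K | (g : C(K, ℝ)) x ≠ 1 ∧ (g : C(K, ℝ)) x ≠ -1} := by
        rw [hempty]; exact notMem_empty x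
      simp only [mem_setOf_eq, not_and_or, not_not] at hx
      rcases hx with h | h <;> simp [h]
    | succ n ih =>
      intro g hfin hnv hcard
      set S := {x : K | (g : C(K, ℝ)) x ≠ 1 ∧ (g : C(K, ℝ)) x ≠ -1} with hSdef
      set q : ↥(Metric.closedBall (0 : C(K, ℝ)) 1) := Ψ g with hqdef
      have hΦq : Φ q = g := hinv₂ g
      -- Claim A : at isolated points outside S, Ψ g agrees with g
      have claimA : ∀ z₀ : K, IsOpen ({z₀} : Set K) → z₀ ∉ S →
          (q : C(K, ℝ)) z₀ = (g : C(K, ℝ)) z₀ := by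
        intro z₀ hz₀ hz₀S
        have hval : (g : C(K, ℝ)) z₀ = 1 ∨ (g : C(K, ℝ)) z₀ = -1 := by
          have := hz₀S
          simp only [hSdef, mem_setOf_eq, not_and_or, not_not] at this
          tauto
        have hclz : IsClopen ({z₀} : Set K) := ⟨(finite_singleton z₀).isClosed, hz₀⟩
        set w : C(K, ℝ) := cupd (g : C(K, ℝ)) {z₀} (-(g : C(K, ℝ)) z₀) hclz with hwdef
        have hwmem : w ∈ Metric.closedBall (0 : C(K, ℝ)) 1 := by
          refine hupd_mem g _ _ _ ?_
          rw [abs_neg]; exact hbd g z₀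
        set W : ↥(Metric.closedBall (0 : C(K, ℝ)) 1) := ⟨w, hwmem⟩ with hWdef
        set E : ↥(Metric.closedBall (0 : C(K, ℝ)) 1) := Ψ W with hEdef
        have hΦE : Φ E = W := hinv₂ W
        -- |g z₀| = 1
        have habs1 : |(g : C(K, ℝ)) z₀| = 1 := by
          rcases hval with h | h <;> simp [h]
        -- distance between g and W is at least 2
        have h2 : (2 : ℝ) ≤ dist q E := by
          have h0 : (2 : ℝ) ≤ dist g W := by
            have hW0 : (W : C(K, ℝ)) z₀ = -(g : C(K, ℝ)) z₀ :=
              cupd_of_mem (f := (g : C(K, ℝ))) (hs := hclz) rfl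
            have := hdist_ge g W z₀
            rw [hW0] at this
            have h2' : |(g : C(K, ℝ)) z₀ - -(g : C(K, ℝ)) z₀| = 2 := by
              rw [sub_neg_eq_add, ← two_mul, abs_mul, habs1]
              norm_num
            linarith [this, h2'.symm.le]
          exact le_trans h0 (hexp g W)
        -- key bound away from z₀
        have keyIso : ∀ z : K, IsOpen ({z} : Set K) → z ≠ z₀ →
            |(q : C(K, ℝ)) z - (E : C(K, ℝ)) z| ≤ 1 := by
          intro z hz hne'
          have hWz : (W : C(K, ℝ)) z = (g : C(K, ℝ)) z :=
            cupd_of_not_mem (f := (g : C(K, ℝ))) (hs := hclz) (by simpa using hne')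
          have hqb := abs_le.mp (hbd q z)
          have hEb := abs_le.mp (hbd E z)
          rcases lt_or_gt_of_ne (hnv z) with hneg | hpos
          · have hq := hP4 g z hz hneg
            have hE := hP4 W z hz (by rw [hWz]; exact hneg)
            rw [abs_sub_le_iff]
            constructor <;> linarith
          · have hq := hP5 g z hz hpos
            have hE := hP5 W z hz (by rw [hWz]; exact hpos)
            rw [abs_sub_le_iff]
            constructor <;> linarith
        have key : ∀ z : K, z ≠ z₀ → |(q : C(K, ℝ)) z - (E : C(K, ℝ)) z| ≤ 1 := by
          have hAcl : IsClosed (S ∪ {z₀}) := (hfin.union (finite_singleton z₀)).isClosed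
          have hU : IsOpen (S ∪ {z₀})ᶜ := hAcl.isOpen_compl
          have hcl : IsClosed {z : K | |(q : C(K, ℝ)) z - (E : C(K, ℝ)) z| ≤ 1} :=
            isClosed_le (((q : C(K, ℝ)).continuous.sub (E : C(K, ℝ)).continuous).abs)
              continuous_const
          have hsub : (S ∪ {z₀})ᶜ ⊆ {z : K | |(q : C(K, ℝ)) z - (E : C(K, ℝ)) z| ≤ 1} := by
            intro z hzU
            have h1 : ((S ∪ {z₀})ᶜ ∩ {x : K | IsOpen ({x} : Set K)}) ⊆
                {z : K | |(q : C(K, ℝ)) z - (E : C(K, ℝ)) z| ≤ 1} := by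
              rintro ww ⟨hwU, hwI⟩
              refine keyIso ww hwI fun h => hwU (Or.inr (by simp [h]))
            exact hcl.closure_subset
              ((closure_mono h1) (open_subset_closure_inter hdense hU hzU))
          intro z hne'
          by_cases hzS : z ∈ S
          · exact keyIso z (isolated_of_mem_S (g : C(K, ℝ)) hfin hzS) hne'
          · refine hsub ?_
            simp only [mem_compl_iff, mem_union, mem_singleton_iff]
            push_neg
            exact ⟨hzS, hne'⟩
        -- the maximum of |q - E| is attained, and it must be at z₀
        obtain ⟨z₁, -, hz₁⟩ := isCompact_univ.exists_isMaxOn (f := fun z : K =>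
            |(q : C(K, ℝ)) z - (E : C(K, ℝ)) z|) ⟨z₀, mem_univ z₀⟩
            (((q : C(K, ℝ)).continuous.sub (E : C(K, ℝ)).continuous).abs.continuousOn)
        have hd : dist q E ≤ |(q : C(K, ℝ)) z₁ - (E : C(K, ℝ)) z₁| :=
          hdist_le q E _ (abs_nonneg _) (fun x => hz₁ (mem_univ x))
        have hz₁big : (2 : ℝ) ≤ |(q : C(K, ℝ)) z₁ - (E : C(K, ℝ)) z₁| := le_trans h2 hd
        have hz₁eq : z₁ = z₀ := by
          by_contra hc
          have := key z₁ hc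
          linarith
        rw [hz₁eq] at hz₁big
        -- conclude
        have hqb := abs_le.mp (hbd q z₀)
        have hEb := abs_le.mp (hbd E z₀)
        rcases hval with h1 | h1
        · have hqpos : 0 < (q : C(K, ℝ)) z₀ := hP5 g z₀ hz₀ (by rw [h1]; norm_num)
          rw [h1]
          rcases le_abs.mp hz₁big with h | h
          · linarith
          · linarith
        · have hqneg : (q : C(K, ℝ)) z₀ < 0 := hP4 g z₀ hz₀ (by rw [h1]; norm_num)
          rw [h1]
          rcases le_abs.mp hz₁big with h | h
          · linarith
          · linarith
      -- Claim B : Ψ g agrees with g everywhere outside S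
      have claimB : ∀ z : K, z ∉ S → (q : C(K, ℝ)) z = (g : C(K, ℝ)) z := by
        have hScl : IsClosed S := hfin.isClosed
        have hU : IsOpen Sᶜ := hScl.isOpen_compl
        have hcl : IsClosed {z : K | (q : C(K, ℝ)) z = (g : C(K, ℝ)) z} :=
          isClosed_eq (q : C(K, ℝ)).continuous (g : C(K, ℝ)).continuous
        intro z hzS
        have h1 : (Sᶜ ∩ {x : K | IsOpen ({x} : Set K)}) ⊆
            {z : K | (q : C(K, ℝ)) z = (g : C(K, ℝ)) z} := by
          rintro ww ⟨hwU, hwI⟩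
          exact claimA ww hwI hwU
        exact hcl.closure_subset
          ((closure_mono h1) (open_subset_closure_inter hdense hU hzS))
      -- S_q ⊆ S and q is nowhere vanishing
      have hSq : {x : K | (q : C(K, ℝ)) x ≠ 1 ∧ (q : C(K, ℝ)) x ≠ -1} ⊆ S := by
        intro x hx
        by_contra hxS
        have := claimB x hxS
        have hgx : (g : C(K, ℝ)) x = 1 ∨ (g : C(K, ℝ)) x = -1 := by
          have := hxS
          simp only [hSdef, mem_setOf_eq, not_and_or, not_not] at this
          tauto
        rcases hgx with h | h
        · exact hx.1 (by rw [claimB x hxS, h])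
        · exact hx.2 (by rw [claimB x hxS, h])
      have hqnv : ∀ x : K, (q : C(K, ℝ)) x ≠ 0 := by
        intro x
        by_cases hxS : x ∈ S
        · have hxiso := isolated_of_mem_S (g : C(K, ℝ)) hfin hxS
          rcases lt_or_gt_of_ne (hnv x) with hneg | hpos
          · exact ne_of_lt (hP4 g x hxiso hneg)
          · exact ne_of_gt (hP5 g x hxiso hpos)
        · rw [claimB x hxS]; exact hnv x
      -- squeeze : q agrees with g on S
      have hsqueeze : ∀ x : K, x ∈ S → (q : C(K, ℝ)) x = (g : C(K, ℝ)) x := by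
        intro x hxS
        have hxiso := isolated_of_mem_S (g : C(K, ℝ)) hfin hxS
        have hclx : IsClopen ({x} : Set K) := ⟨(finite_singleton x).isClosed, hxiso⟩
        have hqb := abs_le.mp (hbd q x)
        have hgb := abs_le.mp (hbd g x)
        -- the two modifications of q at x
        have hmem1 : cupd (q : C(K, ℝ)) {x} 1 hclx ∈ Metric.closedBall (0 : C(K, ℝ)) 1 := by
          refine hupd_mem q _ _ _ (by norm_num)
        have hmem2 : cupd (q : C(K, ℝ)) {x} (-1) hclx ∈ Metric.closedBall (0 : C(K, ℝ)) 1 := by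
          refine hupd_mem q _ _ _ (by norm_num)
        set q1 : ↥(Metric.closedBall (0 : C(K, ℝ)) 1) := ⟨cupd (q : C(K, ℝ)) {x} 1 hclx, hmem1⟩ with hq1def
        set q2 : ↥(Metric.closedBall (0 : C(K, ℝ)) 1) := ⟨cupd (q : C(K, ℝ)) {x} (-1) hclx, hmem2⟩ with hq2def
        have hq1x : (q1 : C(K, ℝ)) x = 1 :=
          cupd_of_mem (f := (q : C(K, ℝ))) (hs := hclx) rfl
        have hq2x : (q2 : C(K, ℝ)) x = -1 :=
          cupd_of_mem (f := (q : C(K, ℝ))) (hs := hclx) rfl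
        have hq1off : ∀ z : K, z ≠ x → (q1 : C(K, ℝ)) z = (q : C(K, ℝ)) z := by
          intro z hz
          exact cupd_of_not_mem (f := (q : C(K, ℝ))) (hs := hclx) (by simpa using hz)
        have hq2off : ∀ z : K, z ≠ x → (q2 : C(K, ℝ)) z = (q : C(K, ℝ)) z := by
          intro z hz
          exact cupd_of_not_mem (f := (q : C(K, ℝ))) (hs := hclx) (by simpa using hz)
        -- cardinality for the inductive hypothesis
        have hcard' : ∀ (r : ↥(Metric.closedBall (0 : C(K, ℝ)) 1)), (∀ z : K, z ≠ x → (r : C(K, ℝ)) z = (q : C(K, ℝ)) z) →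
            ((r : C(K, ℝ)) x = 1 ∨ (r : C(K, ℝ)) x = -1) →
            {z : K | (r : C(K, ℝ)) z ≠ 1 ∧ (r : C(K, ℝ)) z ≠ -1}.Finite ∧
            {z : K | (r : C(K, ℝ)) z ≠ 1 ∧ (r : C(K, ℝ)) z ≠ -1}.ncard ≤ n := by
          intro r hroff hrx
          have hsub : {z : K | (r : C(K, ℝ)) z ≠ 1 ∧ (r : C(K, ℝ)) z ≠ -1} ⊆ S \ {x} := by
            intro z hz
            have hzx : z ≠ x := by
              rintro rfl
              rcases hrx with h | h
              · exact hz.1 h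
              · exact hz.2 h
            refine ⟨hSq ?_, by simpa using hzx⟩
            rw [mem_setOf_eq, ← hroff z hzx]
            exact hz
          have hfin' : (S \ {x} : Set K).Finite := hfin.diff
          refine ⟨hfin'.subset hsub, ?_⟩
          have h1 : {z : K | (r : C(K, ℝ)) z ≠ 1 ∧ (r : C(K, ℝ)) z ≠ -1}.ncard ≤
              (S \ {x}).ncard := Set.ncard_le_ncard hsub hfin'
          have h2 : (S \ {x}).ncard < S.ncard :=
            Set.ncard_diff_singleton_lt_of_mem hxS hfin
          omega
        obtain ⟨hfin1, hcard1⟩ := hcard' q1 hq1off (Or.inl hq1x)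
        obtain ⟨hfin2, hcard2⟩ := hcard' q2 hq2off (Or.inr hq2x)
        have hq1nv : ∀ z : K, (q1 : C(K, ℝ)) z ≠ 0 := by
          intro z
          by_cases hz : z = x
          · rw [hz, hq1x]; norm_num
          · rw [hq1off z hz]; exact hqnv z
        have hq2nv : ∀ z : K, (q2 : C(K, ℝ)) z ≠ 0 := by
          intro z
          by_cases hz : z = x
          · rw [hz, hq2x]; norm_num
          · rw [hq2off z hz]; exact hqnv z
        have hfix1 : Φ q1 = q1 := ih q1 hfin1 hq1nv hcard1
        have hfix2 : Φ q2 = q2 := ih q2 hfin2 hq2nv hcard2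
        -- squeeze inequalities
        have hd1 : dist q q1 ≤ 1 - (q : C(K, ℝ)) x := by
          refine hdist_le q q1 _ (by linarith) ?_
          intro z
          by_cases hz : z = x
          · rw [hz, hq1x]
            rw [abs_sub_comm, abs_of_nonneg (by linarith)]
          · rw [hq1off z hz, sub_self, abs_zero]
            linarith
        have hd2 : dist q q2 ≤ (q : C(K, ℝ)) x + 1 := by
          refine hdist_le q q2 _ (by linarith) ?_
          intro z
          by_cases hz : z = x
          · rw [hz, hq2x]
            rw [sub_neg_eq_add, abs_of_nonneg (by linarith)]
          · rw [hq2off z hz, sub_self, abs_zero]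
            linarith
        have hup : (g : C(K, ℝ)) x ≥ (q : C(K, ℝ)) x := by
          have h1 : dist (Φ q) (Φ q1) ≤ dist q q1 := hne q q1
          rw [hΦq, hfix1] at h1
          have h2 := hdist_ge g q1 x
          rw [hq1x] at h2
          have h3 : 1 - (g : C(K, ℝ)) x ≤ |(g : C(K, ℝ)) x - 1| := by
            rw [abs_sub_comm]
            exact le_abs_self _
          linarith
        have hdown : (g : C(K, ℝ)) x ≤ (q : C(K, ℝ)) x := by
          have h1 : dist (Φ q) (Φ q2) ≤ dist q q2 := hne q q2
          rw [hΦq, hfix2] at h1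
          have h2 := hdist_ge g q2 x
          rw [hq2x] at h2
          have h3 : (g : C(K, ℝ)) x + 1 ≤ |(g : C(K, ℝ)) x - -1| := by
            rw [sub_neg_eq_add]
            exact le_abs_self _
          linarith
        linarith
      -- conclude : q = g
      have hqg : q = g := by
        refine Subtype.ext (ContinuousMap.ext fun z => ?_)
        by_cases hzS : z ∈ S
        · exact hsqueeze z hzS
        · exact claimB z hzS
      have h := hinv₂ g
      rwa [show Ψ g = g from hqg] at h
  -- now remove the nowhere-vanishing assumption by perturbation
  have key2 : ∀ δ : ℝ, 0 < δ → dist (Φ f) f ≤ δ := by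
    intro δ hδ
    set ε : ℝ := min (δ / 2) (1 / 2) with hεdef
    have hε0 : 0 < ε := lt_min (by linarith) (by norm_num)
    have hε1 : ε ≤ 1 / 2 := min_le_right _ _
    have hεδ : ε ≤ δ / 2 := min_le_left _ _
    -- the zero set of f
    set Z : Set K := (f : C(K, ℝ)) ⁻¹' {0} with hZdef
    have hZsub : Z ⊆ {x : K | (f : C(K, ℝ)) x ≠ 1 ∧ (f : C(K, ℝ)) x ≠ -1} := by
      intro x hx
      have hx0 : (f : C(K, ℝ)) x = 0 := hx
      constructor <;> rw [hx0] <;> norm_num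
    have hZfin : Z.Finite := hSf.subset hZsub
    have hZopen : IsOpen Z := by
      have : Z = ⋃ x ∈ Z, ({x} : Set K) := by simp
      rw [this]
      exact isOpen_biUnion fun x hx =>
        isolated_of_mem_S (f : C(K, ℝ)) hSf (hZsub hx)
    have hZcl : IsClopen Z := ⟨hZfin.isClosed, hZopen⟩
    have hmemε : cupd (f : C(K, ℝ)) Z ε hZcl ∈ Metric.closedBall (0 : C(K, ℝ)) 1 := by
      refine hupd_mem f _ _ _ ?_
      rw [abs_of_pos hε0]; linarith
    set fε : ↥(Metric.closedBall (0 : C(K, ℝ)) 1) := ⟨cupd (f : C(K, ℝ)) Z ε hZcl, hmemε⟩ with hfεdef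
    have hfεoff : ∀ z : K, z ∉ Z → (fε : C(K, ℝ)) z = (f : C(K, ℝ)) z := fun z hz =>
      cupd_of_not_mem (f := (f : C(K, ℝ))) (hs := hZcl) hz
    have hfεon : ∀ z : K, z ∈ Z → (fε : C(K, ℝ)) z = ε := fun z hz =>
      cupd_of_mem (f := (f : C(K, ℝ))) (hs := hZcl) hz
    -- fε is nowhere vanishing with finite exceptional set
    have hfεnv : ∀ z : K, (fε : C(K, ℝ)) z ≠ 0 := by
      intro z
      by_cases hz : z ∈ Z
      · rw [hfεon z hz]; exact ne_of_gt hε0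
      · rw [hfεoff z hz]; exact hz
    have hfεS : {x : K | (fε : C(K, ℝ)) x ≠ 1 ∧ (fε : C(K, ℝ)) x ≠ -1} ⊆
        {x : K | (f : C(K, ℝ)) x ≠ 1 ∧ (f : C(K, ℝ)) x ≠ -1} := by
      intro x hx
      by_cases hz : x ∈ Z
      · exact hZsub hz
      · rw [mem_setOf_eq, ← hfεoff x hz]
        exact hx
    have hfεfin := hSf.subset hfεS
    have hfεfix : Φ fε = fε :=
      main {x : K | (fε : C(K, ℝ)) x ≠ 1 ∧ (fε : C(K, ℝ)) x ≠ -1}.ncard fε hfεfin hfεnv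
        le_rfl
    have hdistfε : dist f fε ≤ ε := by
      refine hdist_le f fε _ (le_of_lt hε0) ?_
      intro z
      by_cases hz : z ∈ Z
      · rw [hfεon z hz]
        have hz0 : (f : C(K, ℝ)) z = 0 := hz
        rw [hz0, zero_sub, abs_neg, abs_of_pos hε0]
      · rw [hfεoff z hz, sub_self, abs_zero]
        exact le_of_lt hε0
    calc dist (Φ f) f ≤ dist (Φ f) (Φ fε) + dist (Φ fε) f := dist_triangle _ _ _
      _ ≤ dist f fε + dist (Φ fε) f := by linarith [hne f fε]
      _ = dist f fε + dist fε f := by rw [hfεfix]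
      _ ≤ ε + ε := by
          have := hdistfε
          rw [dist_comm fε f]
          linarith
      _ ≤ δ := by linarith
  have hdist0 : dist (Φ f) f ≤ 0 := by
    by_contra h
    push_neg at h
    have := key2 (dist (Φ f) f / 2) (by linarith)
    linarith
  exact eq_of_dist_eq_zero (le_antisymm hdist0 dist_nonneg)
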